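/- Let s be a state of a congestion game whose cost functions f_e are nonnegative and nondecreasing, and let F ⊆ 𝒩 be any subset of the players. Then φ(s) ≤ φ^F(s) + φ^{𝒩∖F}(s) and φ(s) ≥ φ^F(s). -/
import Mathlib


open Finset

/-- The number of players of the set `F` using resource `e` in the profile `s`. -/
def congLoadF {ι E : Type*} [DecidableEq E] (F : Finset ι) (s : ι → Finset E) (e : E) : ℕ :=
  (F.filter fun u => e ∈ s u).card

/-- The number of players using resource `e` in the profile `s`. -/
def congLoad {ι E : Type*} [Fintype ι] [DecidableEq E] (s : ι → Finset E) (e : E) : ℕ :=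
  congLoadF Finset.univ s e

/-- Rosenthal's potential of the profile `s` with resource cost functions `f`. -/
def congPot {ι E : Type*} [Fintype ι] [Fintype E] [DecidableEq E]
    (f : E → ℕ → ℝ) (s : ι → Finset E) : ℝ :=
  ∑ e, ∑ i ∈ Finset.Icc 1 (congLoad s e), f e i

/-- The potential `φ^F(s)` of the subgame induced by the players of `F`, with the remaining
players frozen at `s`: `φ^F(s) = ∑_e ∑_{i=1}^{n_e^F(s)} f_e (i + n_e^{𝒩∖F}(s))`. -/
def congPotSub {ι E : Type*} [Fintype ι] [DecidableEq ι] [DecidableEq E] [Fintype E]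
    (f : E → ℕ → ℝ) (F : Finset ι) (s : ι → Finset E) : ℝ :=
  ∑ e, ∑ i ∈ Finset.Icc 1 (congLoadF F s e), f e (i + congLoadF (Finset.univ \ F) s e)

lemma sum_Icc_split (g : ℕ → ℝ) (b a : ℕ) :
    ∑ i ∈ Finset.Icc 1 (b + a), g i
      = (∑ i ∈ Finset.Icc 1 b, g i) + ∑ i ∈ Finset.Icc 1 a, g (i + b) := by
  induction a with
  | zero => simp
  | succ a ih =>
      rw [show b + (a + 1) = (b + a) + 1 by ring,
        Finset.sum_Icc_succ_top (by omega : 1 ≤ b + a + 1),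
        Finset.sum_Icc_succ_top (by omega : 1 ≤ a + 1), ih,
        show b + a + 1 = a + 1 + b by ring]
      ring

lemma load_split {ι E : Type*} [Fintype ι] [DecidableEq ι] [DecidableEq E]
    (F : Finset ι) (s : ι → Finset E) (e : E) :
    congLoad s e = congLoadF F s e + congLoadF (Finset.univ \ F) s e := by
  unfold congLoad congLoadF
  rw [← Finset.card_union_of_disjoint, ← Finset.filter_union,
    Finset.union_sdiff_of_subset (Finset.subset_univ F)]
  exact Finset.disjoint_filter_filter (Finset.disjoint_sdiff)

/-- For any state `s` of a congestion game with nonnegative nondecreasing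
cost functions and any subset `F` of the players:
`φ(s) ≤ φ^F(s) + φ^{𝒩∖F}(s)` and `φ(s) ≥ φ^F(s)`. -/
theorem potential_subsets
    {ι E : Type*} [Fintype ι] [DecidableEq ι] [Fintype E] [DecidableEq E]
    (Strat : ι → Finset (Finset E)) (hStrat : ∀ u, (Strat u).Nonempty)
    (f : E → ℕ → ℝ)
    (hfnonneg : ∀ e n, 0 ≤ f e n)
    (hfmono : ∀ e, Monotone (f e))
    (s : ι → Finset E) (hs : ∀ u, s u ∈ Strat u)
    (F : Finset ι) :
    congPot f s ≤ congPotSub f F s + congPotSub f (Finset.univ \ F) s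
      ∧ congPotSub f F s ≤ congPot f s := by
  have hcompl : (Finset.univ \ (Finset.univ \ F)) = F := by
    simp
  unfold congPot congPotSub
  rw [hcompl]
  constructor
  · rw [← Finset.sum_add_distrib]
    apply Finset.sum_le_sum
    intro e _
    rw [load_split F s e, sum_Icc_split (f e)]
    gcongr with i hi
    exact hfmono e (Nat.le_add_right i _)
  · apply Finset.sum_le_sum
    intro e _
    rw [load_split F s e, add_comm (congLoadF F s e), sum_Icc_split (f e)]
    have : (0:ℝ) ≤ ∑ i ∈ Finset.Icc 1 (congLoadF (Finset.univ \ F) s e), f e i :=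
      Finset.sum_nonneg fun i _ => hfnonneg e i
    linarith
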